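/- arXiv:2501.09085 — 2 statements merged into one kernel-verified Lean document; each statement's English description precedes it below -/
import Mathlib

section
/- Let H be a group with center Z(H), let q be a positive integer, and let x, F, g ∈ H. Assume: (1) z := g x g⁻¹ x⁻¹ lies in Z(H); (2) F x F⁻¹ = x^q; (3) the element c := F⁻¹ g F g⁻¹ commutes with x. Then z^q = z. -/
/-- The abstract content of the fact that the character `χ_g` attached to an element of
the component group is Frobenius-stable: with `z = g x g⁻¹ x⁻¹` central,
`F x F⁻¹ = x^q` and `c = F⁻¹ g F g⁻¹` commuting with `x`, one gets `z^q = z`. -/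
theorem stmt1 {H : Type*} [Group H] (q : ℕ) (hq : 1 ≤ q) (x F g : H)
    (hz : g * x * g⁻¹ * x⁻¹ ∈ Subgroup.center H)
    (hF : F * x * F⁻¹ = x ^ q)
    (hc : (F⁻¹ * g * F * g⁻¹) * x = x * (F⁻¹ * g * F * g⁻¹)) :
    (g * x * g⁻¹ * x⁻¹) ^ q = g * x * g⁻¹ * x⁻¹ := by
  set z := g * x * g⁻¹ * x⁻¹ with hzdef
  have hzc : ∀ y : H, y * z = z * y := fun y => Subgroup.mem_center_iff.mp hz y
  have h1 : g * x * g⁻¹ = z * x := by rw [hzdef]; group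
  have hcom : Commute z x := (hzc x).symm
  have h2 : g * x ^ q * g⁻¹ = z ^ q * x ^ q := by
    rw [← hcom.mul_pow, ← h1]
    have := map_pow (MulAut.conj g) x q
    simpa [MulAut.conj_apply, mul_assoc] using this
  -- second computation: g * (F * x * F⁻¹) * g⁻¹ = z * x^q
  set c := F⁻¹ * g * F * g⁻¹ with hcdef
  have hgF : g * F = F * c * g := by rw [hcdef]; group
  have hcxc : c * x * c⁻¹ = x := by rw [hc]; group
  have h3 : g * (F * x * F⁻¹) * g⁻¹ = z * x ^ q := by
    calc g * (F * x * F⁻¹) * g⁻¹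
        = (g * F) * x * (g * F)⁻¹ := by group
      _ = (F * c * g) * x * (F * c * g)⁻¹ := by rw [hgF]
      _ = F * c * (g * x * g⁻¹) * c⁻¹ * F⁻¹ := by group
      _ = F * c * (z * x) * c⁻¹ * F⁻¹ := by rw [h1]
      _ = z * (F * (c * x * c⁻¹) * F⁻¹) := by
          rw [show F * c * (z * x) * c⁻¹ * F⁻¹ = F * c * z * x * c⁻¹ * F⁻¹ by group,
            show F * c * z = z * (F * c) by rw [mul_assoc, hzc, ← mul_assoc, hzc,
              mul_assoc, mul_assoc] ]
          group
      _ = z * (F * x * F⁻¹) := by rw [hcxc]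
      _ = z * x ^ q := by rw [hF]
  have h4 : z ^ q * x ^ q = z * x ^ q := by rw [← h2, ← h3, hF]
  exact mul_right_cancel h4
end

section
/- Let G be a finite group, N ⊴ G a normal subgroup with G/N abelian, and let (R, V) be a finite-dimensional complex representation of G whose restriction to N decomposes as V = ⊕_{i=1}^k V_i, where V_i is the subspace on which N acts by the conjugate representation ^{g_i}π of a fixed irreducible representation π of N, and {g_1,…,g_k} is a set of coset representatives of Stab_G(π) in G. Let χ : G → ℂ× be a homomorphism trivial on N and trivial on Stab_G(π). Then R ⊗ χ ≅ R as representations of G; an explicit intertwiner is given by A acting on V_i as the scalar χ(g_i⁻¹). -/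
/-- Conjugation `ν ↦ x⁻¹ ν x` as a monoid homomorphism of a normal subgroup `N`. -/
def conjIn {G : Type*} [Group G] (N : Subgroup G) [hN : N.Normal] (x : G) : ↥N →* ↥N where
  toFun ν := ⟨x⁻¹ * (ν : G) * x, by simpa using hN.conj_mem _ ν.2 x⁻¹⟩
  map_one' := Subtype.ext (by simp)
  map_mul' a b := Subtype.ext (by push_cast; group)


lemma conjIn_conjIn {G : Type*} [Group G] (N : Subgroup G) [hN : N.Normal] (x y : G) (ν : ↥N) :
    conjIn N x (conjIn N y ν) = conjIn N (y * x) ν := Subtype.ext (by simp [conjIn]; group)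

lemma conjIn_surj {G : Type*} [Group G] (N : Subgroup G) [hN : N.Normal] (x : G) :
    Function.Surjective (conjIn N x) := fun ν =>
  ⟨conjIn N x⁻¹ ν, by rw [conjIn_conjIn]; exact Subtype.ext (by simp [conjIn])⟩

/-- Schur-type lemma. -/
lemma schur_bij {W : Type*} [AddCommGroup W] [Module ℂ W] [Nontrivial W]
    {M : Type*} [Monoid M]
    (π : Representation ℂ M W)
    (hirr : ∀ U : Submodule ℂ W, (∀ (ν : M), ∀ w ∈ U, π ν w ∈ U) → U = ⊥ ∨ U = ⊤)
    (c₁ c₂ : M →* M) (hc₁ : Function.Surjective c₁) (hc₂ : Function.Surjective c₂)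
    (T : W →ₗ[ℂ] W) (hT : ∀ (ν : M) (w : W), T (π (c₁ ν) w) = π (c₂ ν) (T w))
    (hT0 : T ≠ 0) : Function.Bijective T := by
  have hker : ∀ (ν : M), ∀ w ∈ LinearMap.ker T, π ν w ∈ LinearMap.ker T := by
    intro ν w hw
    obtain ⟨μ, rfl⟩ := hc₁ ν
    simp only [LinearMap.mem_ker] at hw ⊢
    rw [hT, hw, map_zero]
  have hrange : ∀ (ν : M), ∀ w ∈ LinearMap.range T, π ν w ∈ LinearMap.range T := by
    intro ν w hw
    obtain ⟨μ, rfl⟩ := hc₂ ν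
    obtain ⟨u, rfl⟩ := hw
    exact ⟨π (c₁ μ) u, (hT μ u)⟩
  constructor
  · rw [← LinearMap.ker_eq_bot]
    rcases hirr _ hker with h | h
    · exact h
    · exact absurd (LinearMap.ker_eq_top.mp h) hT0
  · rw [← LinearMap.range_eq_top]
    rcases hirr _ hrange with h | h
    · exact absurd (LinearMap.range_eq_bot.mp h) hT0
    · exact h

open scoped DirectSum in
/-- Clifford-theoretic construction: if `Res_N R = ⊕ᵢ {}^{gᵢ}π` with `π` irreducible and
`g₁,…,g_k` coset representatives of `Stab_G(π)`, and `χ` is a character of `G` trivial on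
`N` and on `Stab_G(π)`, then `R ⊗ χ ≅ R`, with explicit intertwiner acting on the `i`-th
summand by the scalar `χ(gᵢ⁻¹)`. -/
theorem stmt8 {G : Type*} [Group G] [Fintype G] (N : Subgroup G) [hN : N.Normal]
    (hab : ∀ x y : G ⧸ N, x * y = y * x)
    {V : Type*} [AddCommGroup V] [Module ℂ V] [FiniteDimensional ℂ V]
    (R : Representation ℂ G V)
    {W : Type*} [AddCommGroup W] [Module ℂ W] [Nontrivial W]
    (π : Representation ℂ ↥N W)
    -- `π` is irreducible
    (hirr : ∀ U : Submodule ℂ W, (∀ (ν : ↥N), ∀ w ∈ U, π ν w ∈ U) → U = ⊥ ∨ U = ⊤)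
    (k : ℕ) (g : Fin k → G) (Vsub : Fin k → Submodule ℂ V)
    -- `V = ⊕ᵢ Vᵢ`
    (hdecomp : DirectSum.IsInternal Vsub)
    -- `N` acts on `Vᵢ` by the conjugate representation `^{gᵢ}π`
    (e : ∀ i : Fin k, W ≃ₗ[ℂ] ↥(Vsub i))
    (he : ∀ (i : Fin k) (ν : ↥N) (w : W),
      R (ν : G) ((e i w : V)) = ((e i ((π.comp (conjIn N (g i))) ν w) : V)))
    -- `Stab` is the stabilizer `Stab_G(π)` of `π` in `G`
    (Stab : Subgroup G)
    (hStab : ∀ x : G, x ∈ Stab ↔ ∃ f : W ≃ₗ[ℂ] W,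
      ∀ (ν : ↥N) (w : W), f ((π.comp (conjIn N x)) ν w) = π ν (f w))
    -- the `gᵢ` are a set of representatives of the cosets of `Stab` in `G`
    (hreps : ∀ x : G, ∃! i : Fin k, (g i)⁻¹ * x ∈ Stab)
    -- `χ` is a character of `G` trivial on `N` and on `Stab`
    (χ : G →* ℂˣ) (hχN : ∀ ν ∈ N, χ ν = 1) (hχS : ∀ s ∈ Stab, χ s = 1) :
    ∃ A : V ≃ₗ[ℂ] V,
      (∀ (i : Fin k), ∀ v ∈ Vsub i, A v = (χ ((g i)⁻¹) : ℂ) • v) ∧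
      (∀ (s : G) (v : V), A ((χ s : ℂ) • R s v) = R s (A v)) := by
  classical
  -- the decomposition equivalence
  set E : (⨁ i, ↥(Vsub i)) ≃ₗ[ℂ] V :=
    LinearEquiv.ofBijective (DirectSum.coeLinearMap Vsub) hdecomp with hE
  have hEof : ∀ (m : Fin k) (x : ↥(Vsub m)),
      E (DirectSum.lof ℂ (Fin k) (fun i => ↥(Vsub i)) m x) = (x : V) := fun m x =>
    DirectSum.coeLinearMap_of Vsub m x
  -- projections
  set p := fun m : Fin k => (DirectSum.component ℂ (Fin k) (fun i => ↥(Vsub i)) m) ∘ₗ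
      (E.symm : V →ₗ[ℂ] ⨁ i, ↥(Vsub i)) with hp
  have hsum : ∀ v : V, ∑ m, ((p m v : V)) = v := by
    intro v
    have h1 : ∑ m, DirectSum.of (fun i => ↥(Vsub i)) m (E.symm v m) = E.symm v :=
      DirectSum.sum_univ_of _
    calc ∑ m, ((p m v : V)) = ∑ m, E (DirectSum.lof ℂ (Fin k) (fun i => ↥(Vsub i)) m
          (E.symm v m)) := by
          refine Finset.sum_congr rfl fun m _ => ?_
          rw [hEof]; rfl
      _ = E (∑ m, DirectSum.of (fun i => ↥(Vsub i)) m (E.symm v m)) := by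
          rw [map_sum]; rfl
      _ = v := by rw [h1, E.apply_symm_apply]
  have huniq : ∀ (u : ∀ m : Fin k, ↥(Vsub m)) (v : V),
      v = ∑ m, ((u m : V)) → ∀ m, p m v = u m := by
    intro u v hv m
    have h2 : E.symm v = ∑ l, DirectSum.lof ℂ (Fin k) (fun i => ↥(Vsub i)) l (u l) := by
      apply E.injective
      rw [E.apply_symm_apply, map_sum, hv]
      exact (Finset.sum_congr rfl fun l _ => (hEof l (u l)).symm).symm ▸ rfl
    have : p m v = DirectSum.component ℂ (Fin k) (fun i => ↥(Vsub i)) m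
        (∑ l, DirectSum.lof ℂ (Fin k) (fun i => ↥(Vsub i)) l (u l)) := by
      rw [hp]; simp only [LinearMap.comp_apply]; rw [← h2]; rfl
    rw [this, map_sum, Finset.sum_eq_single m]
    · simp [DirectSum.component.of]
    · intro l _ hl
      rw [DirectSum.component.of, dif_neg hl]
    · intro h; exact absurd (Finset.mem_univ m) h
  -- each Vsub m is invariant under R(ν), ν ∈ N
  have hinv : ∀ (m : Fin k) (ν : ↥N) (v : V), v ∈ Vsub m → R (ν : G) v ∈ Vsub m := by
    intro m ν v hv
    have hv' : v = ((e m) ((e m).symm ⟨v, hv⟩) : V) := by rw [LinearEquiv.apply_symm_apply]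
    rw [hv', he m ν]
    exact ((e m) _).2
  -- p m commutes with R(ν) for ν ∈ N
  have hpN : ∀ (m : Fin k) (ν : ↥N) (v : V),
      ((p m (R (ν : G) v)) : V) = R (ν : G) ((p m v : V)) := by
    intro m ν v
    have h := huniq (fun l => ⟨R (ν : G) ((p l v : V)), hinv l ν _ (p l v).2⟩)
      (R (ν : G) v) ?_ m
    · exact Subtype.ext_iff.mp h
    · conv_lhs => rw [← hsum v]
      rw [map_sum]
  -- projection of elements of a single summand
  have hproj : ∀ (i : Fin k) (x : ↥(Vsub i)) (m : Fin k),
      ((p m ((x : V))) : V) = if m = i then (x : V) else 0 := by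
    intro i x m
    have hcoe : ∀ l : Fin k,
        (((if h : l = i then (⟨(x : V), h ▸ x.2⟩ : ↥(Vsub l)) else 0) : ↥(Vsub l)) : V)
          = if l = i then (x : V) else 0 := by
      intro l; by_cases h : l = i <;> simp [h]
    have h := huniq (fun l => if h : l = i then ⟨(x : V), h ▸ x.2⟩ else 0) (x : V) ?_ m
    · rw [Subtype.ext_iff.mp h, hcoe]
    · rw [Finset.sum_congr rfl (fun l _ => hcoe l), Finset.sum_ite_eq' Finset.univ i,
        if_pos (Finset.mem_univ i)]
  -- main lemma: R s maps Vsub i into Vsub j where (g j)⁻¹ * (s * g i) ∈ Stab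
  have main : ∀ (s : G) (i : Fin k), ∃ j : Fin k, (g j)⁻¹ * (s * g i) ∈ Stab ∧
      ∀ v ∈ Vsub i, R s v ∈ Vsub j := by
    intro s i
    obtain ⟨j, hj, hjuniq⟩ := hreps (s * g i)
    refine ⟨j, hj, ?_⟩
    have hTzero : ∀ m : Fin k, m ≠ j → ∀ w : W, p m (R s ((e i w : V))) = 0 := by
      intro m hm
      set T : W →ₗ[ℂ] W := ((e m).symm : ↥(Vsub m) →ₗ[ℂ] W) ∘ₗ (p m) ∘ₗ (R s) ∘ₗ
        ((Vsub i).subtype) ∘ₗ ((e i) : W →ₗ[ℂ] ↥(Vsub i)) with hT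
      have hTapp : ∀ w : W, (e m) (T w) = p m (R s ((e i w : V))) := by
        intro w
        rw [hT]
        simp only [LinearMap.comp_apply, LinearEquiv.coe_coe]
        rw [LinearEquiv.apply_symm_apply]
        rfl
      have hTint : ∀ (ν : ↥N) (w : W),
          T (π (conjIn N (s * g i) ν) w) = π (conjIn N (g m) ν) (T w) := by
        intro ν w
        apply (e m).injective
        apply Subtype.coe_injective
        rw [hTapp]
        set ν' : ↥N := ⟨s⁻¹ * (ν : G) * s, by simpa using hN.conj_mem _ ν.2 s⁻¹⟩ with hν'
        have hconj : conjIn N (g i) ν' = conjIn N (s * g i) ν :=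
          Subtype.ext (by simp only [conjIn, MonoidHom.coe_mk, OneHom.coe_mk, hν']; group)
        have hmul : ∀ x : V, R (ν : G) (R s x) = R s (R (ν' : G) x) := by
          intro x
          have h1 : (ν : G) * s = s * (ν' : G) := by rw [hν']; group
          calc R (ν : G) (R s x) = R ((ν : G) * s) x := by rw [map_mul]; rfl
            _ = R (s * (ν' : G)) x := by rw [h1]
            _ = R s (R (ν' : G) x) := by rw [map_mul]; rfl
        have hhe : ((e m (π (conjIn N (g m) ν) (T w)) : V)) = R (ν : G) ((e m (T w) : V)) :=
          (he m ν (T w)).symm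
        beta_reduce
        rw [hhe, hTapp, ← hpN, hmul, he i ν']
        simp only [MonoidHom.comp_apply]
        rw [hconj]
      by_cases hT0 : T = 0
      · intro w
        have := hTapp w
        rw [hT0] at this
        simp only [LinearMap.zero_apply, map_zero] at this
        exact this.symm
      · exfalso
        have hbij : Function.Bijective T :=
          schur_bij π hirr (conjIn N (s * g i)) (conjIn N (g m))
            (conjIn_surj N _) (conjIn_surj N _) T hTint hT0
        set f : W ≃ₗ[ℂ] W := LinearEquiv.ofBijective T hbij with hf
        have hx : (g m)⁻¹ * (s * g i) ∈ Stab := by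
          rw [hStab]
          refine ⟨f, fun μ w => ?_⟩
          set ν : ↥N := ⟨(g m) * (μ : G) * (g m)⁻¹, by simpa using hN.conj_mem _ μ.2 (g m)⟩
            with hν
          have h1 : conjIn N (g m) ν = μ :=
            Subtype.ext (by simp only [conjIn, MonoidHom.coe_mk, OneHom.coe_mk, hν]; group)
          have h2 : conjIn N (s * g i) ν = conjIn N ((g m)⁻¹ * (s * g i)) μ :=
            Subtype.ext (by simp only [conjIn, MonoidHom.coe_mk, OneHom.coe_mk, hν]; group)
          have hfT : ∀ w' : W, f w' = T w' := fun _ => rfl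
          calc f ((π.comp (conjIn N ((g m)⁻¹ * (s * g i)))) μ w)
              = T (π (conjIn N (s * g i) ν) w) := by
                simp only [MonoidHom.comp_apply]
                rw [hfT, ← h2]
            _ = π (conjIn N (g m) ν) (T w) := hTint ν w
            _ = π μ (f w) := by rw [h1, hfT]
        exact hm (hjuniq m hx)
    intro v hv
    set w : W := (e i).symm ⟨v, hv⟩ with hw
    have hvw : ((e i w : V)) = v := by rw [hw, LinearEquiv.apply_symm_apply]
    have : R s v = ∑ m, ((p m (R s v) : V)) := (hsum _).symm
    rw [this, Finset.sum_eq_single j]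
    · exact (p j (R s v)).2
    · intro m _ hm
      rw [← hvw, Subtype.ext_iff.mp (hTzero m hm w)]
      rfl
    · intro h; exact absurd (Finset.mem_univ j) h
  -- construction of the intertwiner
  set q : Fin k → (V →ₗ[ℂ] V) := fun m => (Vsub m).subtype ∘ₗ p m with hq
  set A₀ : V →ₗ[ℂ] V := ∑ m, (χ ((g m)⁻¹) : ℂ) • q m with hA₀
  set B₀ : V →ₗ[ℂ] V := ∑ m, (χ (g m) : ℂ) • q m with hB₀
  have hscal : ∀ (c : Fin k → ℂˣ) (i : Fin k), ∀ v ∈ Vsub i,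
      (∑ m, ((c m : ℂ) • q m)) v = (c i : ℂ) • v := by
    intro c i v hv
    rw [LinearMap.sum_apply]
    have hterm : ∀ m : Fin k, ((c m : ℂ) • q m) v = if m = i then (c i : ℂ) • v else 0 := by
      intro m
      rw [LinearMap.smul_apply]
      have h3 : q m v = ((p m ((⟨v, hv⟩ : ↥(Vsub i)) : V) : V)) := rfl
      rw [h3, hproj i ⟨v, hv⟩ m]
      by_cases h : m = i <;> simp [h]
    rw [Finset.sum_congr rfl fun m _ => hterm m, Finset.sum_ite_eq' Finset.univ i,
      if_pos (Finset.mem_univ i)]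
  have hA₀v : ∀ (i : Fin k), ∀ v ∈ Vsub i, A₀ v = (χ ((g i)⁻¹) : ℂ) • v :=
    hscal (fun m => χ ((g m)⁻¹))
  have hB₀v : ∀ (i : Fin k), ∀ v ∈ Vsub i, B₀ v = (χ (g i) : ℂ) • v :=
    hscal (fun m => χ (g m))
  have hone : ∀ m : Fin k, (χ (g m) : ℂ) * (χ ((g m)⁻¹) : ℂ) = 1 := by
    intro m
    rw [map_inv]
    exact Units.mul_inv _
  have hAB : ∀ v, A₀ (B₀ v) = v := by
    intro v
    conv_rhs => rw [← hsum v]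
    conv_lhs => rw [← hsum v]
    rw [map_sum, map_sum]
    refine Finset.sum_congr rfl fun m _ => ?_
    rw [hB₀v m _ (p m v).2, map_smul, hA₀v m _ (p m v).2, smul_smul, hone, one_smul]
  have hBA : ∀ v, B₀ (A₀ v) = v := by
    intro v
    conv_rhs => rw [← hsum v]
    conv_lhs => rw [← hsum v]
    rw [map_sum, map_sum]
    refine Finset.sum_congr rfl fun m _ => ?_
    rw [hA₀v m _ (p m v).2, map_smul, hB₀v m _ (p m v).2, smul_smul, mul_comm, hone, one_smul]
  refine ⟨LinearEquiv.ofLinear A₀ B₀ (LinearMap.ext hAB) (LinearMap.ext hBA), ?_, ?_⟩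
  · exact hA₀v
  · intro s v
    show A₀ ((χ s : ℂ) • R s v) = R s (A₀ v)
    have hL : A₀ ((χ s : ℂ) • R s v) = ∑ m, (χ s : ℂ) • A₀ (R s ((p m v : V))) := by
      rw [map_smul]
      conv_lhs => rw [← hsum v]
      rw [map_sum, map_sum, Finset.smul_sum]
    have hR : R s (A₀ v) = ∑ m, (χ ((g m)⁻¹) : ℂ) • R s ((p m v : V)) := by
      conv_lhs => rw [← hsum v]
      rw [map_sum, map_sum]
      refine Finset.sum_congr rfl fun m _ => ?_
      rw [hA₀v m _ (p m v).2, map_smul]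
    rw [hL, hR]
    refine Finset.sum_congr rfl fun m _ => ?_
    obtain ⟨j, hjmem, hjmap⟩ := main s m
    rw [hA₀v j _ (hjmap _ (p m v).2), smul_smul]
    congr 1
    -- (χ s : ℂ) * (χ ((g j)⁻¹) : ℂ) = (χ ((g m)⁻¹) : ℂ)
    have h1 : (χ ((g j)⁻¹ * (s * g m)) : ℂ) = 1 := by rw [hχS _ hjmem, Units.val_one]
    simp only [map_mul, map_inv, Units.val_mul, Units.val_inv_eq_inv_val] at h1 ⊢
    field_simp at h1 ⊢
    linear_combination h1
end
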